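/- arXiv:2312.01512 — 2 statements merged into one kernel-verified Lean document; each statement's English description precedes it below -/
import Mathlib

section
/- The lattice generated by (√3, 0) and (√3/2, 3/2) is a covering lattice for the Euclidean unit disk D_2, and the resulting covering density, det(Λ) being 3√3/2, equals area(D_2)/det(Λ) = 2π/(3√3). -/
/-!
The points `(m √3/2, 3l/2)` with `m ≡ l (mod 2)` lie in the lattice. Rounding first the
second and then the first coordinate moves any point of the plane by a lattice vector into the
rectangle `|x| ≤ √3/2`, `|y| ≤ 3/4`. That rectangle is covered by the unit disks around the
origin and the four lattice points `(±√3/2, ±3/2)`: by symmetry it suffices to check the quarter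
`0 ≤ x ≤ √3/2`, `0 ≤ y ≤ 3/4`, where a point outside the disk at the origin lies in the disk
around `(√3/2, 3/2)`.
-/

open Real MeasureTheory

theorem volume_disk {r : ℝ} (hr : 0 ≤ r) :
    volume {q : ℝ × ℝ | q.1 ^ 2 + q.2 ^ 2 ≤ r ^ 2} = ENNReal.ofReal (π * r ^ 2) := by
  have hmeas : MeasurableSet {q : ℝ × ℝ | q.1 ^ 2 + q.2 ^ 2 ≤ r ^ 2} :=
    measurableSet_le (by fun_prop) (by fun_prop)
  have hpreimage : Complex.measurableEquivRealProd ⁻¹' {q | q.1 ^ 2 + q.2 ^ 2 ≤ r ^ 2} =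
      Metric.closedBall (0 : ℂ) r := by
    ext z
    rw [Set.mem_preimage, Complex.measurableEquivRealProd_apply, Set.mem_ofPred_eq,
      Metric.mem_closedBall, dist_zero_right, ← sq_le_sq₀ (norm_nonneg z) hr, Complex.sq_norm,
      Complex.normSq_apply]
    ring_nf
  rw [← Complex.volume_preserving_equiv_real_prod.measure_preimage hmeas.nullMeasurableSet,
    hpreimage, Complex.volume_closedBall, ← ENNReal.ofReal_pow hr, ← ENNReal.ofReal_coe_nnreal,
    NNReal.coe_real_pi, ← ENNReal.ofReal_mul (by positivity), mul_comm]

theorem exists_int_abs_sub_mul_le (x : ℝ) {r : ℝ} (hr : 0 < r) :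
    ∃ n : ℤ, |x - n * r| ≤ r / 2 := by
  refine ⟨round (x / r), ?_⟩
  calc |x - round (x / r) * r| = r * |x / r - round (x / r)| := by
        rw [show x - round (x / r) * r = r * (x / r - round (x / r)) by field_simp, abs_mul,
          abs_of_pos hr]
    _ ≤ r * (1 / 2) := by gcongr; exact abs_sub_round _
    _ = r / 2 := by ring

theorem exists_odd_sq_sub_mul_eq (a r : ℝ) :
    ∃ s : ℤ, Odd s ∧ (a - s * r) ^ 2 = (|a| - r) ^ 2 := by
  rcases le_total 0 a with ha | ha
  · exact ⟨1, odd_one, by rw [abs_of_nonneg ha]; push_cast; ring⟩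
  · exact ⟨-1, by decide, by rw [abs_of_nonpos ha]; push_cast; ring⟩

def hexLattice : AddSubgroup (ℝ × ℝ) :=
  AddSubgroup.closure {((√3, 0) : ℝ × ℝ), (√3 / 2, 3 / 2)}

theorem mem_hexLattice {m l : ℤ} (h : Even (m + l)) :
    ((m * (√3 / 2), l * (3 / 2)) : ℝ × ℝ) ∈ hexLattice := by
  obtain ⟨k, hk⟩ := h
  have hu : ((√3, 0) : ℝ × ℝ) ∈ hexLattice := AddSubgroup.subset_closure (by simp)
  have hw : ((√3 / 2, 3 / 2) : ℝ × ℝ) ∈ hexLattice := AddSubgroup.subset_closure (by simp)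
  have hm : (m : ℝ) = 2 * k - l := by
    rw [show m = 2 * k - l by lia]
    push_cast
    ring
  convert add_mem (zsmul_mem hu (k - l)) (zsmul_mem hw l) using 1
  ext <;> simp [zsmul_eq_mul, hm]; ring

theorem corner_covered {a b : ℝ} (ha₀ : 0 ≤ a) (ha : a ≤ √3 / 2) (hb₀ : 0 ≤ b) (hb : b ≤ 3 / 4) :
    a ^ 2 + b ^ 2 ≤ 1 ∨ (a - √3 / 2) ^ 2 + (b - 3 / 2) ^ 2 ≤ 1 := by
  have hsqrt : √3 ^ 2 = 3 := sq_sqrt (by norm_num)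
  -- Outside the unit disk `b ≥ 1/2`; then `2a² ≤ √3 a` and `2b² ≤ 3b - 1` bound the sum of the
  -- squared distances to `0` and to `(√3/2, 3/2)` by `2`.
  refine or_iff_not_imp_left.mpr fun hout => ?_
  have hb_half : 1 / 2 ≤ b := by nlinarith
  nlinarith [mul_nonneg ha₀ (by linarith : 0 ≤ √3 - 2 * a),
    mul_nonneg (by linarith : (0:ℝ) ≤ 2 * b - 1) (by linarith : (0:ℝ) ≤ 1 - b)]

theorem rectangle_covered {a c : ℝ} (ha : |a| ≤ √3 / 2) (hc : |c| ≤ 3 / 4) :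
    ∃ i j : ℤ, Even (i + j) ∧ (a - i * (√3 / 2)) ^ 2 + (c - j * (3 / 2)) ^ 2 ≤ 1 := by
  rcases corner_covered (abs_nonneg a) ha (abs_nonneg c) hc with h | h
  · exact ⟨0, 0, by decide, by simpa using h⟩
  · obtain ⟨i, hi, hia⟩ := exists_odd_sq_sub_mul_eq a (√3 / 2)
    obtain ⟨j, hj, hjc⟩ := exists_odd_sq_sub_mul_eq c (3 / 2)
    exact ⟨i, j, hi.add_odd hj, by rwa [hia, hjc]⟩

theorem hexLattice_covering (z : ℝ × ℝ) :
    ∃ v ∈ hexLattice, (z - v).1 ^ 2 + (z - v).2 ^ 2 ≤ 1 := by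
  obtain ⟨l, hl⟩ := exists_int_abs_sub_mul_le z.2 (by norm_num : (0:ℝ) < 3 / 2)
  obtain ⟨n, hn⟩ := exists_int_abs_sub_mul_le (z.1 - l * (√3 / 2)) (by positivity : 0 < √3)
  obtain ⟨i, j, hij, hcov⟩ := rectangle_covered (a := z.1 - l * (√3 / 2) - n * √3)
    (c := z.2 - l * (3 / 2)) hn (by linarith)
  refine ⟨_, mem_hexLattice (m := 2 * n + l + i) (l := l + j) ?_, ?_⟩
  · rw [show 2 * n + l + i + (l + j) = 2 * (n + l) + (i + j) by ring]
    exact (even_two_mul _).add hij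
  · convert hcov using 3 <;> simp only [Prod.fst_sub, Prod.snd_sub] <;> push_cast <;> ring

theorem D2_covering_lattice :
    let Λ : AddSubgroup (ℝ × ℝ) :=
      AddSubgroup.closure {((Real.sqrt 3, 0) : ℝ × ℝ), (Real.sqrt 3 / 2, 3 / 2)}
    let D : Set (ℝ × ℝ) := {q | q.1 ^ 2 + q.2 ^ 2 ≤ 1}
    (∀ z : ℝ × ℝ, ∃ v ∈ Λ, z - v ∈ D) ∧
    |Real.sqrt 3 * (3 / 2) - 0 * (Real.sqrt 3 / 2)| = 3 * Real.sqrt 3 / 2 ∧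
    volume D = ENNReal.ofReal π ∧
    π / (3 * Real.sqrt 3 / 2) = 2 * π / (3 * Real.sqrt 3) := by
  intro Λ D
  refine ⟨hexLattice_covering, ?_, by simpa using volume_disk zero_le_one, by field_simp⟩
  rw [zero_mul, sub_zero, abs_of_nonneg (by positivity)]
  ring
end

section
/- The Davis constant p₀, defined as a solution of Δ(p,σ_p) = Δ(p,1) in the stated form (1/2)(2^p-1)^{1/p} = 4^{-1/p}(1+τ_p)/(1-τ_p) where τ_p is the root of 2(1-τ)^p = 1+τ^p in [0,1), exists in the interval (2.57, 2.58). -/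
/-!
With `K(p) = 4^{1/p} Δ⁰(p)`, the equation `Δ⁰(p) = Δ¹(p)` says `(1 + τ_p)/(1 - τ_p) = K(p)`,
i.e. `τ_p = T(p) = (K(p) - 1)/(K(p) + 1)`. The gap `g_p(τ) = 2(1 - τ)^p - (1 + τ^p)` is strictly
decreasing on `[0, 1]`, so `τ_p` is its only zero there, and it suffices to find `p₀` with
`g_{p₀}(T(p₀)) = 0`. The function `p ↦ g_p(T(p))` is continuous, positive at `2.57` and negative
at `2.58`; both signs are certified by bounding `K` and then `g_p` at a rational point, where
each rational power `a^{n/d}` is compared with a rational number `c` through `a^n` and `c^d`.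
-/

open Real Set

lemma rpow_natCast_div_pow {a : ℝ} (ha : 0 ≤ a) (n : ℕ) {d : ℕ} (hd : d ≠ 0) :
    (a ^ ((n : ℝ) / d)) ^ d = a ^ n := by
  rw [← rpow_natCast, ← rpow_mul ha, div_mul_cancel₀ _ (Nat.cast_ne_zero.mpr hd),
    rpow_natCast]

lemma rpow_le_of_pow_le {a c x : ℝ} {n d : ℕ} (hd : d ≠ 0) (ha : 0 ≤ a) (hc : 0 ≤ c)
    (hx : x = n / d) (h : a ^ n ≤ c ^ d) : a ^ x ≤ c := by
  subst hx
  rwa [← pow_le_pow_iff_left₀ (rpow_nonneg ha _) hc hd, rpow_natCast_div_pow ha n hd]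

lemma le_rpow_of_pow_le {a c x : ℝ} {n d : ℕ} (hd : d ≠ 0) (ha : 0 ≤ a) (hc : 0 ≤ c)
    (hx : x = n / d) (h : c ^ d ≤ a ^ n) : c ≤ a ^ x := by
  subst hx
  rwa [← pow_le_pow_iff_left₀ hc (rpow_nonneg ha _) hd, rpow_natCast_div_pow ha n hd]

lemma sub_one_div_add_one_le {a b : ℝ} (ha : -1 < a) (hab : a ≤ b) :
    (a - 1) / (a + 1) ≤ (b - 1) / (b + 1) := by
  rw [div_le_div_iff₀ (by linarith) (by linarith)]
  nlinarith

lemma sub_one_div_add_one_mem_Icc {k : ℝ} (hk : 1 ≤ k) : (k - 1) / (k + 1) ∈ Icc 0 1 :=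
  ⟨div_nonneg (by linarith) (by linarith), (div_le_one (by linarith)).mpr (by linarith)⟩

noncomputable def davisGap (p τ : ℝ) : ℝ := 2 * (1 - τ) ^ p - (1 + τ ^ p)

lemma strictAntiOn_davisGap {p : ℝ} (hp : 0 < p) : StrictAntiOn (davisGap p) (Icc 0 1) := by
  intro a ha b hb hab
  have h1 : (1 - b) ^ p < (1 - a) ^ p := rpow_lt_rpow (by linarith [hb.2]) (by linarith) hp
  have h2 : a ^ p ≤ b ^ p := rpow_le_rpow ha.1 hab.le hp.le
  unfold davisGap
  linarith

noncomputable def davisK (p : ℝ) : ℝ := 4 ^ (1 / p) * ((1 / 2) * (2 ^ p - 1) ^ (1 / p))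

noncomputable def davisT (p : ℝ) : ℝ := (davisK p - 1) / (davisK p + 1)

noncomputable def davisH (p : ℝ) : ℝ := davisGap p (davisT p)

lemma davisK_eq {p : ℝ} (hp : 0 ≤ p) : davisK p = (1 / 2) * (4 * (2 ^ p - 1)) ^ (1 / p) := by
  have : (1 : ℝ) ≤ 2 ^ p := one_le_rpow one_le_two hp
  rw [davisK, mul_rpow zero_le_four (by linarith)]
  ring

lemma davisK_nonneg {p : ℝ} (hp : 0 ≤ p) : 0 ≤ davisK p := by
  have : (1 : ℝ) ≤ 2 ^ p := one_le_rpow one_le_two hp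
  rw [davisK_eq hp]
  exact mul_nonneg one_half_pos.le (rpow_nonneg (by linarith) _)

lemma one_le_davisK {p : ℝ} (hp : 1 ≤ p) : 1 ≤ davisK p := by
  have h2 : (2 : ℝ) ≤ 2 ^ p := by simpa using rpow_le_rpow_of_exponent_le one_le_two hp
  have h : (2 : ℝ) ≤ (4 * (2 ^ p - 1)) ^ (1 / p) := calc
    (2 : ℝ) = (2 ^ p) ^ (1 / p) := by
      rw [← rpow_mul zero_le_two, mul_one_div_cancel (by linarith), rpow_one]
    _ ≤ (4 * (2 ^ p - 1)) ^ (1 / p) := rpow_le_rpow (by positivity) (by linarith) (by positivity)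
  rw [davisK_eq (by linarith)]
  linarith

lemma one_add_davisT_div_one_sub {p : ℝ} (hp : 0 ≤ p) :
    (1 + davisT p) / (1 - davisT p) = davisK p := by
  have := davisK_nonneg hp
  rw [davisT]
  field_simp
  ring

lemma continuousOn_davisK : ContinuousOn davisK (Ioi 0) := by
  have hinv : ContinuousOn (fun p : ℝ => 1 / p) (Ioi 0) :=
    continuousOn_const.div continuousOn_id fun p hp => ne_of_gt hp
  have hpow : ContinuousOn (fun p : ℝ => (2 : ℝ) ^ p) (Ioi 0) :=
    continuousOn_const.rpow continuousOn_id fun _ _ => Or.inl two_ne_zero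
  exact (continuousOn_const.rpow hinv fun _ _ => Or.inl four_ne_zero).mul
    (continuousOn_const.mul ((hpow.sub continuousOn_const).rpow hinv
      fun p hp => Or.inr (one_div_pos.mpr hp)))

lemma continuousOn_davisH : ContinuousOn davisH (Ioi 0) := by
  have hT : ContinuousOn davisT (Ioi 0) :=
    (continuousOn_davisK.sub continuousOn_const).div (continuousOn_davisK.add continuousOn_const)
      fun p hp => by linarith [davisK_nonneg (le_of_lt hp)]
  exact (continuousOn_const.mul ((continuousOn_const.sub hT).rpow continuousOn_id
    fun _ hp => Or.inr hp)).sub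
      (continuousOn_const.add (hT.rpow continuousOn_id fun _ hp => Or.inr hp))

lemma davisGap_le_davisH {p k : ℝ} (hp : 1 ≤ p) (hk : davisK p ≤ k) :
    davisGap p ((k - 1) / (k + 1)) ≤ davisH p := by
  have hK := one_le_davisK hp
  exact (strictAntiOn_davisGap (by linarith)).antitoneOn (sub_one_div_add_one_mem_Icc hK)
    (sub_one_div_add_one_mem_Icc (hK.trans hk)) (sub_one_div_add_one_le (by linarith) hk)

lemma davisH_le_davisGap {p k : ℝ} (hp : 1 ≤ p) (hk₁ : 1 ≤ k) (hk : k ≤ davisK p) :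
    davisH p ≤ davisGap p ((k - 1) / (k + 1)) :=
  (strictAntiOn_davisGap (by linarith)).antitoneOn (sub_one_div_add_one_mem_Icc hk₁)
    (sub_one_div_add_one_mem_Icc (one_le_davisK hp)) (sub_one_div_add_one_le (by linarith) hk)

-- `norm_num` leaves powers with an exponent above 256 unevaluated.
lemma pow_257 (a : ℝ) : a ^ 257 = a ^ 128 * a ^ 129 := by rw [← pow_add]

lemma davisK_257_le : davisK 2.57 ≤ 1.59625421 := by
  have h2 : (2 : ℝ) ^ (2.57 : ℝ) ≤ 5.93809429 :=
    rpow_le_of_pow_le (n := 257) (d := 100) (by norm_num) (by norm_num) (by norm_num) (by norm_num)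
      (by rw [pow_257]; norm_num)
  have h : (4 * ((2 : ℝ) ^ (2.57 : ℝ) - 1)) ^ (1 / (2.57 : ℝ)) ≤ 2 * 1.59625421 := calc
    _ ≤ (4 * (5.93809429 - 1) : ℝ) ^ (1 / (2.57 : ℝ)) :=
      rpow_le_rpow (by linarith [one_le_rpow one_le_two (by norm_num : (0 : ℝ) ≤ 2.57)])
        (by linarith) (by norm_num)
    _ ≤ 2 * 1.59625421 :=
      rpow_le_of_pow_le (n := 100) (d := 257) (by norm_num) (by norm_num) (by norm_num)
        (by norm_num) (by rw [pow_257]; norm_num)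
  rw [davisK_eq (by norm_num)]
  linarith

lemma davisGap_257_pos : 0 < davisGap 2.57 ((1.59625421 - 1) / (1.59625421 + 1)) := by
  have h1 : 0.51141651 ≤ (1 - (1.59625421 - 1) / (1.59625421 + 1) : ℝ) ^ (2.57 : ℝ) :=
    le_rpow_of_pow_le (n := 257) (d := 100) (by norm_num) (by norm_num) (by norm_num) (by norm_num)
      (by rw [pow_257]; norm_num)
  have h2 : ((1.59625421 - 1) / (1.59625421 + 1) : ℝ) ^ (2.57 : ℝ) ≤ 0.02280272 :=
    rpow_le_of_pow_le (n := 257) (d := 100) (by norm_num) (by norm_num) (by norm_num) (by norm_num)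
      (by rw [pow_257]; norm_num)
  unfold davisGap
  linarith

lemma le_davisK_258 : 1.594226915 ≤ davisK 2.58 := by
  have h2 : (5.97939699 : ℝ) ≤ 2 ^ (2.58 : ℝ) :=
    le_rpow_of_pow_le (n := 129) (d := 50) (by norm_num) (by norm_num) (by norm_num) (by norm_num)
      (by norm_num)
  have h : 2 * 1.594226915 ≤ (4 * ((2 : ℝ) ^ (2.58 : ℝ) - 1)) ^ (1 / (2.58 : ℝ)) := calc
    2 * 1.594226915 ≤ (4 * (5.97939699 - 1) : ℝ) ^ (1 / (2.58 : ℝ)) :=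
      le_rpow_of_pow_le (n := 50) (d := 129) (by norm_num) (by norm_num) (by norm_num) (by norm_num)
        (by norm_num)
    _ ≤ _ := rpow_le_rpow (by norm_num) (by linarith) (by norm_num)
  rw [davisK_eq (by norm_num)]
  linarith

lemma davisGap_258_neg : davisGap 2.58 ((1.594226915 - 1) / (1.594226915 + 1)) < 0 := by
  have h1 : (1 - (1.594226915 - 1) / (1.594226915 + 1) : ℝ) ^ (2.58 : ℝ) ≤ 0.51111291 :=
    rpow_le_of_pow_le (n := 129) (d := 50) (by norm_num) (by norm_num) (by norm_num) (by norm_num)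
      (by norm_num)
  have h2 : 0.02231806 ≤ ((1.594226915 - 1) / (1.594226915 + 1) : ℝ) ^ (2.58 : ℝ) :=
    le_rpow_of_pow_le (n := 129) (d := 50) (by norm_num) (by norm_num) (by norm_num) (by norm_num)
      (by norm_num)
  unfold davisGap
  linarith

lemma exists_davisH_eq_zero : ∃ p ∈ Ioo (2.57 : ℝ) 2.58, davisH p = 0 := by
  have hpos : 0 < davisH 2.57 :=
    davisGap_257_pos.trans_le (davisGap_le_davisH (by norm_num) davisK_257_le)
  have hneg : davisH 2.58 < 0 :=
    (davisH_le_davisGap (by norm_num) (by norm_num) le_davisK_258).trans_lt davisGap_258_neg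
  exact intermediate_value_Ioo' (by norm_num)
    (continuousOn_davisH.mono fun p hp => lt_of_lt_of_le (by norm_num) hp.1) ⟨hneg, hpos⟩

theorem davis_constant_exists :
    ∃ p₀ ∈ Set.Ioo (2.57 : ℝ) 2.58,
      ∀ τ : ℝ, τ ∈ Set.Ico (0 : ℝ) 1 → 2 * (1 - τ) ^ p₀ = 1 + τ ^ p₀ →
        (1 / 2) * ((2 : ℝ) ^ p₀ - 1) ^ (1 / p₀) =
          (4 : ℝ) ^ (-(1 / p₀)) * (1 + τ) / (1 - τ) := by
  obtain ⟨p, hp, hH⟩ := exists_davisH_eq_zero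
  have hp₁ : 1 ≤ p := by linarith [hp.1]
  have hp₀ : 0 < p := by linarith
  refine ⟨p, hp, fun τ hτ hroot => ?_⟩
  have hτ : τ = davisT p :=
    (strictAntiOn_davisGap hp₀).injOn (Ico_subset_Icc_self hτ)
      (sub_one_div_add_one_mem_Icc (one_le_davisK hp₁))
      (by rw [← davisH, hH, davisGap, hroot, sub_self])
  rw [hτ, mul_div_assoc, one_add_davisT_div_one_sub hp₀.le, davisK, ← mul_assoc,
    ← rpow_add zero_lt_four, neg_add_cancel, rpow_zero, one_mul]
end
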